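/- arXiv:1305.5528 — 4 statements merged into one kernel-verified Lean document; each statement's English description precedes it below -/
import Mathlib

section
/- Let P_q ∈ (0,1] for q = 1,…,d with P_q monotonically non-decreasing in q, and define V_d by V_1 = (1−P_1)/P_1² and V_d = 2 V_{d−1}/P_d + 4^{d−1}(1−P_d)/(P_d² ⋯ P_1²). Then V_d ≤ (2^{2d−1}(1−P_1)/(P_d² ⋯ P_1²))·(1 + (P_d ⋯ P_1)/(2^d P_1)). -/
open Finset

/-!
Multiplying the recursion by `(P₁⋯P_d)²` turns it into the linear recursion
`U_d = 2 P_d U_{d-1} + 4^{d-1} (1 - P_d)` for `U_d = (P₁⋯P_d)² V_d`. Monotonicity bounds `1 - P_d`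
by `1 - P₁`, and then induction gives `U_d ≤ (1 - P₁)/2 · (4^d + 2^d P₂⋯P_d)`, because `P_d ≤ 1`
lets the new term `P_d 4^{d-1}` be absorbed into the doubling of `4^{d-1}`.
-/

theorem le_of_doubling_recurrence (p U : ℕ → ℝ) (c : ℝ)
    (hp0 : ∀ q, 0 ≤ p q) (hp1 : ∀ q, p q ≤ 1) (hc : 0 ≤ c) (hU1 : U 1 ≤ 3 * c)
    (hrec : ∀ d, 1 ≤ d → U (d + 1) ≤ 2 * p (d + 1) * U d + 4 ^ d * c) :
    ∀ d, 1 ≤ d → U d ≤ c * ((4 ^ d + 2 ^ d * ∏ q ∈ Ioc 1 d, p q) / 2) := by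
  intro d hd
  induction d, hd using Nat.le_induction with
  | base => simp only [Ioc_self, prod_empty]; linarith
  | succ d hd ih =>
    have hcp : c * p (d + 1) ≤ c := mul_le_of_le_one_right hc (hp1 _)
    calc U (d + 1) ≤ 2 * p (d + 1) * U d + 4 ^ d * c := hrec d hd
      _ ≤ 2 * p (d + 1) * (c * ((4 ^ d + 2 ^ d * ∏ q ∈ Ioc 1 d, p q) / 2)) + 4 ^ d * c := by
        gcongr
        linarith [hp0 (d + 1)]
      _ = 4 ^ d * (c * p (d + 1)) + 4 ^ d * c
            + c / 2 * (2 ^ (d + 1) * ((∏ q ∈ Ioc 1 d, p q) * p (d + 1))) := by ring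
      _ ≤ c * ((4 ^ (d + 1) + 2 ^ (d + 1) * ∏ q ∈ Ioc 1 (d + 1), p q) / 2) := by
        have h4 : 4 ^ d * (c * p (d + 1)) ≤ 4 ^ d * c := by gcongr
        rw [prod_Ioc_succ_top hd, pow_succ (4 : ℝ)]
        linarith

theorem prod_sq_mul_eq_of_recurrence (P V : ℕ → ℝ) (hP0 : ∀ q, P q ≠ 0) (n : ℕ)
    (hV : V (n + 1) = 2 * V n / P (n + 1)
      + 4 ^ n * (1 - P (n + 1)) / ∏ q ∈ Icc 1 (n + 1), P q ^ 2) :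
    (∏ q ∈ Icc 1 (n + 1), P q) ^ 2 * V (n + 1)
      = 2 * P (n + 1) * ((∏ q ∈ Icc 1 n, P q) ^ 2 * V n) + 4 ^ n * (1 - P (n + 1)) := by
  have hprod : ∏ q ∈ Icc 1 n, P q ≠ 0 := prod_ne_zero_iff.mpr fun q _ => hP0 q
  rw [hV, prod_pow, prod_Icc_succ_top (by omega)]
  field_simp [hP0 (n + 1), hprod]

theorem two_pow_mul_one_add_prod_div (P : ℕ → ℝ) (hP : P 1 ≠ 0) {d : ℕ} (hd : 1 ≤ d) :
    2 ^ (2 * d - 1) * (1 + (∏ q ∈ Icc 1 d, P q) / (2 ^ d * P 1))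
      = (4 ^ d + 2 ^ d * ∏ q ∈ Ioc 1 d, P q) / 2 := by
  obtain ⟨n, rfl⟩ : ∃ n, d = n + 1 := ⟨d - 1, by omega⟩
  have h4 : (4 : ℝ) ^ (n + 1) = 2 * 2 ^ (2 * n + 1) := by
    rw [show (4 : ℝ) = 2 ^ 2 by norm_num, ← pow_mul, ← pow_succ']
    ring_nf
  rw [show 2 * (n + 1) - 1 = 2 * n + 1 by omega, Icc_eq_cons_Ioc hd, prod_cons, h4]
  field_simp
  ring

/-- variance recursion bound for the composed gearbox circuit.
With P_q ∈ (0,1] non-decreasing, V_1 = (1−P_1)/P_1², and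
V_d = 2V_{d−1}/P_d + 4^{d−1}(1−P_d)/(P_d²⋯P_1²), we have
V_d ≤ (2^{2d−1}(1−P_1)/(P_d²⋯P_1²))·(1 + (P_d⋯P_1)/(2^d P_1)). -/
theorem composed_gearbox_variance_bound (P V : ℕ → ℝ)
    (hP0 : ∀ q : ℕ, 0 < P q) (hP1 : ∀ q : ℕ, P q ≤ 1) (hPmono : Monotone P)
    (hV1 : V 1 = (1 - P 1) / (P 1) ^ 2)
    (hVrec : ∀ d : ℕ, 2 ≤ d →
      V d = 2 * V (d - 1) / P d
        + 4 ^ (d - 1) * (1 - P d) / ∏ q ∈ Finset.Icc 1 d, (P q) ^ 2) :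
    ∀ d : ℕ, 1 ≤ d →
      V d ≤ (2 ^ (2 * d - 1) * (1 - P 1) / ∏ q ∈ Finset.Icc 1 d, (P q) ^ 2) *
        (1 + (∏ q ∈ Finset.Icc 1 d, P q) / (2 ^ d * P 1)) := by
  intro d hd
  have hU1 : (∏ q ∈ Icc 1 1, P q) ^ 2 * V 1 ≤ 3 * (1 - P 1) := by
    rw [Icc_self, prod_singleton, hV1, mul_div_cancel₀ _ (pow_pos (hP0 1) 2).ne']
    linarith [hP1 1]
  have hUrec : ∀ n, 1 ≤ n → (∏ q ∈ Icc 1 (n + 1), P q) ^ 2 * V (n + 1)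
      ≤ 2 * P (n + 1) * ((∏ q ∈ Icc 1 n, P q) ^ 2 * V n) + 4 ^ n * (1 - P 1) := by
    intro n hn
    rw [prod_sq_mul_eq_of_recurrence P V (fun q => (hP0 q).ne') n (hVrec (n + 1) (by omega))]
    gcongr
    exact hPmono (by omega)
  have hU := le_of_doubling_recurrence P (fun n => (∏ q ∈ Icc 1 n, P q) ^ 2 * V n) (1 - P 1)
    (fun q => (hP0 q).le) hP1 (by linarith [hP1 1]) hU1 hUrec d hd
  have hA : 0 < (∏ q ∈ Icc 1 d, P q) ^ 2 := pow_pos (prod_pos fun q _ => hP0 q) 2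
  calc V d = (∏ q ∈ Icc 1 d, P q) ^ 2 * V d / (∏ q ∈ Icc 1 d, P q) ^ 2 :=
        (mul_div_cancel_left₀ _ hA.ne').symm
    _ ≤ (1 - P 1) * ((4 ^ d + 2 ^ d * ∏ q ∈ Ioc 1 d, P q) / 2) / (∏ q ∈ Icc 1 d, P q) ^ 2 := by
      gcongr
    _ = _ := by
      rw [prod_pow, ← two_pow_mul_one_add_prod_div P (hP0 1).ne' hd]
      ring
end

section
/- For 0 < θ₀ ≤ π/8, writing t = tan θ₀ and P_q = sin⁴(φ_q) + cos⁴(φ_q) with φ_q = arctan(t^{2^{q−1}}), the product satisfies 1/(P_1 ⋯ P_d) ≤ exp(4t²/(1−t²)) < 5/2 for all d ≥ 1. -/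
/-!
Since sin⁴ + cos⁴ = 1 - 2 sin² cos², the factor with φ = arctan x equals (1 + x⁴)/(1 + x²)² ≥ 1 - 2x²,
which is at least exp(-4x²) while x² ≤ 1/4. With x = t^{2^{q-1}} the exponents 4 t^{2^q} are dominated
by the geometric series 4 ∑ (t²)^q = 4t²/(1 - t²), and tan(π/8) = √2 - 1 makes this at most 5/6.
-/

open Finset Real

/-- The paper's `P_q` is `gearboxFactor (tan θ₀ ^ 2 ^ (q - 1))`. -/
noncomputable def gearboxFactor (x : ℝ) : ℝ := sin (arctan x) ^ 4 + cos (arctan x) ^ 4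

theorem gearboxFactor_eq (x : ℝ) : gearboxFactor x = (1 + x ^ 4) / (1 + x ^ 2) ^ 2 := by
  have hs := sin_sq_arctan x
  have hc := cos_sq_arctan x
  rw [gearboxFactor, show sin (arctan x) ^ 4 = (sin (arctan x) ^ 2) ^ 2 by ring,
    show cos (arctan x) ^ 4 = (cos (arctan x) ^ 2) ^ 2 by ring, hs, hc]
  field_simp
  ring

theorem one_sub_two_mul_sq_le_gearboxFactor (x : ℝ) : 1 - 2 * x ^ 2 ≤ gearboxFactor x := by
  rw [gearboxFactor_eq, le_div_iff₀ (by positivity)]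
  nlinarith [pow_nonneg (sq_nonneg x) 2, pow_nonneg (sq_nonneg x) 3]

theorem exp_neg_two_mul_le_one_sub {x : ℝ} (hx0 : 0 ≤ x) (hx : x ≤ 1 / 2) :
    exp (-(2 * x)) ≤ 1 - x := by
  rw [exp_neg, inv_le_iff_one_le_mul₀' (exp_pos _)]
  nlinarith [add_one_le_exp (2 * x)]

theorem exp_neg_four_mul_sq_le_gearboxFactor {x : ℝ} (hx : x ^ 2 ≤ 1 / 4) :
    exp (-(4 * x ^ 2)) ≤ gearboxFactor x :=
  calc exp (-(4 * x ^ 2)) = exp (-(2 * (2 * x ^ 2))) := by ring_nf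
    _ ≤ 1 - 2 * x ^ 2 := exp_neg_two_mul_le_one_sub (by positivity) (by linarith)
    _ ≤ gearboxFactor x := one_sub_two_mul_sq_le_gearboxFactor x

theorem sum_Icc_pow_two_pow_le {t : ℝ} (h0 : 0 ≤ t) (h1 : t < 1) (d : ℕ) :
    ∑ q ∈ Icc 1 d, t ^ 2 ^ q ≤ t ^ 2 / (1 - t ^ 2) := by
  have ht2 : t ^ 2 < 1 := by nlinarith
  calc ∑ q ∈ Icc 1 d, t ^ 2 ^ q ≤ ∑ q ∈ Ico 1 (d + 1), (t ^ 2) ^ q := by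
        rw [Ico_add_one_right_eq_Icc]
        refine sum_le_sum fun q _ => ?_
        rw [← pow_mul]
        exact pow_le_pow_of_le_one h0 h1.le (Nat.mul_le_pow (by norm_num) q)
    _ ≤ (t ^ 2) ^ 1 / (1 - t ^ 2) := geom_sum_Ico_le_of_lt_one (sq_nonneg t) ht2
    _ = t ^ 2 / (1 - t ^ 2) := by rw [pow_one]

theorem exp_neg_le_prod_gearboxFactor {t : ℝ} (h0 : 0 ≤ t) (h1 : t ≤ 1 / 2) (d : ℕ) :
    exp (-(4 * t ^ 2 / (1 - t ^ 2))) ≤ ∏ q ∈ Icc 1 d, gearboxFactor (t ^ 2 ^ (q - 1)) := by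
  have hterm : ∀ q ∈ Icc 1 d, exp (-(4 * t ^ 2 ^ q)) ≤ gearboxFactor (t ^ 2 ^ (q - 1)) := by
    intro q hq
    have hq : (t ^ 2 ^ (q - 1)) ^ 2 = t ^ 2 ^ q := by
      rw [← pow_mul, ← pow_succ, Nat.sub_add_cancel (mem_Icc.1 hq).1]
    refine hq ▸ exp_neg_four_mul_sq_le_gearboxFactor ?_
    have hle : t ^ 2 ^ (q - 1) ≤ t := pow_le_of_le_one h0 (by linarith) (by positivity)
    nlinarith [pow_nonneg h0 (2 ^ (q - 1))]
  calc exp (-(4 * t ^ 2 / (1 - t ^ 2)))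
      ≤ exp (∑ q ∈ Icc 1 d, -(4 * t ^ 2 ^ q)) := by
        rw [exp_le_exp, sum_neg_distrib, ← mul_sum, neg_le_neg_iff, mul_div_assoc]
        gcongr
        exact sum_Icc_pow_two_pow_le h0 (by linarith) d
    _ = ∏ q ∈ Icc 1 d, exp (-(4 * t ^ 2 ^ q)) := exp_sum _ _
    _ ≤ _ := prod_le_prod (fun q _ => (exp_pos _).le) hterm

theorem tan_le_sqrt_two_sub_one {θ : ℝ} (h0 : 0 ≤ θ) (h1 : θ ≤ π / 8) : tan θ ≤ √2 - 1 := by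
  have hpi := pi_pos
  have ht0 : 0 ≤ tan θ := tan_nonneg_of_nonneg_of_le_pi_div_two h0 (by linarith)
  have ht1 : tan θ < 1 := by
    rw [← tan_pi_div_four]
    exact strictMonoOn_tan ⟨by linarith, by linarith⟩ ⟨by linarith, by linarith⟩ (by linarith)
  have h2θ : tan (2 * θ) ≤ 1 := by
    rw [← tan_pi_div_four]
    exact strictMonoOn_tan.monotoneOn ⟨by linarith, by linarith⟩ ⟨by linarith, by linarith⟩
      (by linarith)
  -- with t = tan θ this reads 2t ≤ 1 - t², i.e. (t + 1)² ≤ 2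
  rw [tan_two_mul, div_le_one (by nlinarith)] at h2θ
  nlinarith [sq_sqrt (zero_le_two : (0 : ℝ) ≤ 2), sqrt_nonneg 2]

theorem exp_five_div_six_lt : exp (5 / 6) < 5 / 2 := by
  have h : exp (5 / 6) ^ 6 < (5 / 2 : ℝ) ^ 6 := by
    rw [← exp_nat_mul, show ((6 : ℕ) : ℝ) * (5 / 6) = (5 : ℕ) * 1 by norm_num, exp_nat_mul]
    calc exp 1 ^ 5 < 2.7182818286 ^ 5 := by gcongr; exact exp_one_lt_d9
      _ < (5 / 2) ^ 6 := by norm_num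
  exact lt_of_pow_lt_pow_left₀ 6 (by norm_num) h

theorem composed_gearbox_product_bound_general (θ₀ : ℝ) (h0 : 0 < θ₀) (h1 : θ₀ ≤ Real.pi / 8)
    (d : ℕ) :
    (1 / ∏ q ∈ Finset.Icc 1 d,
        (Real.sin (Real.arctan (Real.tan θ₀ ^ (2 ^ (q - 1)))) ^ 4 +
         Real.cos (Real.arctan (Real.tan θ₀ ^ (2 ^ (q - 1)))) ^ 4)
      ≤ Real.exp (4 * Real.tan θ₀ ^ 2 / (1 - Real.tan θ₀ ^ 2))) ∧
    Real.exp (4 * Real.tan θ₀ ^ 2 / (1 - Real.tan θ₀ ^ 2)) < 5 / 2 := by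
  set t := tan θ₀
  have ht0 : 0 ≤ t := tan_nonneg_of_nonneg_of_le_pi_div_two h0.le (by linarith [pi_pos])
  have ht : t ≤ √2 - 1 := tan_le_sqrt_two_sub_one h0.le h1
  -- (√2 - 1)² = 3 - 2√2 ≤ 5/29 because 41² ≤ 2 · 29²
  have ht2 : t ^ 2 ≤ 5 / 29 := by
    have hsqrt : 41 / 29 ≤ √2 := (le_sqrt' (by norm_num)).2 (by norm_num)
    nlinarith [sq_sqrt (zero_le_two : (0 : ℝ) ≤ 2)]
  refine ⟨?_, ?_⟩
  · have hprod := exp_neg_le_prod_gearboxFactor ht0 (by nlinarith) d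
    calc 1 / ∏ q ∈ Icc 1 d, gearboxFactor (t ^ 2 ^ (q - 1))
        ≤ 1 / exp (-(4 * t ^ 2 / (1 - t ^ 2))) := one_div_le_one_div_of_le (exp_pos _) hprod
      _ = exp (4 * t ^ 2 / (1 - t ^ 2)) := by rw [exp_neg, one_div, inv_inv]
  · calc exp (4 * t ^ 2 / (1 - t ^ 2)) ≤ exp (5 / 6) := by
          rw [exp_le_exp, div_le_iff₀ (by linarith)]
          linarith
      _ < 5 / 2 := exp_five_div_six_lt

/-- for 0 < θ₀ ≤ π/8 and t = tan θ₀, with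
P_q = sin⁴φ_q + cos⁴φ_q, φ_q = arctan(t^{2^{q−1}}), we have
1/(P_1⋯P_d) ≤ exp(4t²/(1−t²)) < 5/2 for all d ≥ 1. -/
theorem composed_gearbox_product_bound (θ₀ : ℝ) (h0 : 0 < θ₀) (h1 : θ₀ ≤ Real.pi / 8)
    (d : ℕ) (hd : 1 ≤ d) :
    (1 / ∏ q ∈ Finset.Icc 1 d,
        (Real.sin (Real.arctan (Real.tan θ₀ ^ (2 ^ (q - 1)))) ^ 4 +
         Real.cos (Real.arctan (Real.tan θ₀ ^ (2 ^ (q - 1)))) ^ 4)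
      ≤ Real.exp (4 * Real.tan θ₀ ^ 2 / (1 - Real.tan θ₀ ^ 2))) ∧
    Real.exp (4 * Real.tan θ₀ ^ 2 / (1 - Real.tan θ₀ ^ 2)) < 5 / 2 :=
  composed_gearbox_product_bound_general θ₀ h0 h1 d
end

section
/- If u = ((a₀ + b₀√2) + i(a₁ + b₁√2))/√2^κ with a₀,b₀,a₁,b₁ ∈ ℤ, κ ∈ ℕ, and |u|² ≤ ε with 2^κ ε ≤ 1/4, then |a_j + b_j √2| ≤ 1/2 for j = 0,1, and consequently a_j is uniquely determined by b_j, namely a_j is the nearest integer to −b_j√2. -/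
/-!
Since `|u|² = (x₀² + x₁²) / 2^κ` with `xⱼ = aⱼ + bⱼ√2`, the hypotheses give `x₀² + x₁² ≤ 1/4`,
so `|xⱼ| ≤ 1/2`. This bound is in fact strict: for `bⱼ ≠ 0` the number `xⱼ` is irrational, and for
`bⱼ = 0` it is an integer. Hence `aⱼ` lies strictly within `1/2` of `-bⱼ√2`, so it is its rounding.
-/

lemma Complex.sq_norm_ofReal_add_I_mul (x y : ℝ) :
    ‖(x : ℂ) + Complex.I * y‖ ^ 2 = x ^ 2 + y ^ 2 := by
  rw [Complex.sq_norm, mul_comm, Complex.normSq_add_mul_I]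

lemma abs_le_of_sq_add_sq_le {x y r : ℝ} (h : x ^ 2 + y ^ 2 ≤ r ^ 2) (hr : 0 ≤ r) : |x| ≤ r :=
  abs_le_of_sq_le_sq (by nlinarith [sq_nonneg y]) hr

lemma round_eq_of_abs_sub_lt_half {α : Type*} [Field α] [LinearOrder α] [IsStrictOrderedRing α]
    [FloorRing α] {x : α} {n : ℤ} (h : |(n : α) - x| < 1 / 2) : round x = n := by
  rw [round_eq_iff]
  obtain ⟨h₁, h₂⟩ := abs_sub_lt_iff.mp h
  constructor <;> linarith

lemma abs_intCast_add_intCast_mul_sqrt_two_ne_half (a b : ℤ) :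
    |(a : ℝ) + b * √2| ≠ 1 / 2 := by
  rcases eq_or_ne b 0 with rfl | hb
  · intro h
    have h2a : 2 * |a| = 1 := by
      simp only [Int.cast_zero, zero_mul, add_zero] at h
      exact_mod_cast (by linarith : 2 * |(a : ℝ)| = 1)
    omega
  · have hirr : Irrational ((a : ℝ) + b * √2) :=
      (irrational_sqrt_two.intCast_mul hb).intCast_add a
    rw [Ne, abs_eq (by norm_num)]
    rintro (h | h)
    · exact hirr.ne_rat (1 / 2) (by rw [h]; norm_num)
    · exact hirr.ne_rat (-(1 / 2)) (by rw [h]; norm_num)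

lemma eq_round_neg_mul_sqrt_two_of_abs_le_half {a b : ℤ} (h : |(a : ℝ) + b * √2| ≤ 1 / 2) :
    a = round (-(b : ℝ) * √2) := by
  refine (round_eq_of_abs_sub_lt_half ?_).symm
  rw [neg_mul, sub_neg_eq_add]
  exact h.lt_of_ne (abs_intCast_add_intCast_mul_sqrt_two_ne_half a b)

theorem mantissa_search_constraint_general (a₀ b₀ a₁ b₁ : ℤ) (κ : ℕ) (ε : ℝ)
    (hκε : 2 ^ κ * ε ≤ 1 / 4)
    (hu : ‖(
        (((a₀ : ℝ) + (b₀ : ℝ) * Real.sqrt 2 : ℝ) : ℂ)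
            + Complex.I * (((a₁ : ℝ) + (b₁ : ℝ) * Real.sqrt 2 : ℝ) : ℂ))‖ ^ 2 / (2 : ℝ) ^ κ ≤ ε) :
    |(a₀ : ℝ) + (b₀ : ℝ) * Real.sqrt 2| ≤ 1 / 2 ∧
    |(a₁ : ℝ) + (b₁ : ℝ) * Real.sqrt 2| ≤ 1 / 2 ∧
    a₀ = round (-(b₀ : ℝ) * Real.sqrt 2) ∧
    a₁ = round (-(b₁ : ℝ) * Real.sqrt 2) := by
  rw [Complex.sq_norm_ofReal_add_I_mul, div_le_iff₀ (by positivity)] at hu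
  have hsq : ((a₀ : ℝ) + b₀ * √2) ^ 2 + ((a₁ : ℝ) + b₁ * √2) ^ 2 ≤ (1 / 2) ^ 2 := by
    linarith
  have h₀ := abs_le_of_sq_add_sq_le hsq (by norm_num)
  have h₁ := abs_le_of_sq_add_sq_le ((add_comm _ _).trans_le hsq) (by norm_num)
  exact ⟨h₀, h₁, eq_round_neg_mul_sqrt_two_of_abs_le_half h₀,
    eq_round_neg_mul_sqrt_two_of_abs_le_half h₁⟩

/-- if u = ((a₀+b₀√2) + i(a₁+b₁√2))/√2^κ and |u|² ≤ ε with 2^κ ε ≤ 1/4,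
then |a_j + b_j√2| ≤ 1/2 for j = 0,1, and a_j is the nearest integer to −b_j√2. -/
theorem mantissa_search_constraint (a₀ b₀ a₁ b₁ : ℤ) (κ : ℕ) (ε : ℝ) (hε : 0 < ε)
    (hκε : 2 ^ κ * ε ≤ 1 / 4)
    (hu : ‖(
        (((a₀ : ℝ) + (b₀ : ℝ) * Real.sqrt 2 : ℝ) : ℂ)
            + Complex.I * (((a₁ : ℝ) + (b₁ : ℝ) * Real.sqrt 2 : ℝ) : ℂ))‖ ^ 2 / (2 : ℝ) ^ κ ≤ ε) :
    |(a₀ : ℝ) + (b₀ : ℝ) * Real.sqrt 2| ≤ 1 / 2 ∧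
    |(a₁ : ℝ) + (b₁ : ℝ) * Real.sqrt 2| ≤ 1 / 2 ∧
    a₀ = round (-(b₀ : ℝ) * Real.sqrt 2) ∧
    a₁ = round (-(b₁ : ℝ) * Real.sqrt 2) :=
  mantissa_search_constraint_general a₀ b₀ a₁ b₁ κ ε hκε hu
end

section
/- If u is an entry of some 2×2 unitary matrix with all entries in ℤ[i,1/√2], written u = (a + bω + cω² + dω³)/√2^κ with a,b,c,d ∈ ℤ and κ = ⌈m/2⌉, then a² + b² + c² + d² ≤ 2^{⌈m/2⌉}. -/
open Complex Matrix

/-- ω = e^{iπ/4}. -/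
noncomputable def ω8 : ℂ := Complex.exp (Complex.I * (Real.pi / 4))

/-- Membership in the ring ℤ[i,1/√2]: z = (a+bω+cω²+dω³)/√2^κ for integers a,b,c,d and κ ∈ ℕ. -/
def InRingZW (z : ℂ) : Prop :=
  ∃ (a b c d : ℤ) (κ : ℕ),
    z = ((a : ℂ) + (b : ℂ) * ω8 + (c : ℂ) * ω8 ^ 2 + (d : ℂ) * ω8 ^ 3) /
      (Real.sqrt 2 : ℂ) ^ κ

/-!
Writing x = a + bω + cω² + dω³, one has |x|² = (a² + b² + c² + d²) + (ab + bc + cd − da)√2.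
If u = x/√2^κ and v = y/√2^λ lie in one row of a unitary matrix, then
2^λ |x|² + 2^κ |y|² = 2^(κ+λ). Since √2 is irrational the rational parts of both sides agree,
and as the rational part of |y|² is a sum of squares, a² + b² + c² + d² ≤ 2^κ.
-/

theorem ω8_eq : ω8 = ((Real.sqrt 2 / 2 : ℝ) : ℂ) * (1 + I) := by
  rw [ω8, mul_comm, exp_mul_I,
    show (↑Real.pi / 4 : ℂ) = ((Real.pi / 4 : ℝ) : ℂ) by push_cast; ring,
    ← ofReal_cos, ← ofReal_sin, Real.cos_pi_div_four, Real.sin_pi_div_four]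
  ring

theorem ω8_sq : ω8 ^ 2 = I := by
  rw [ω8, ← exp_nat_mul]
  convert exp_pi_div_two_mul_I using 2
  push_cast
  ring

theorem normSq_int_add_ω8 (a b c d : ℤ) :
    normSq ((a : ℂ) + (b : ℂ) * ω8 + (c : ℂ) * ω8 ^ 2 + (d : ℂ) * ω8 ^ 3) =
      ((a ^ 2 + b ^ 2 + c ^ 2 + d ^ 2 : ℤ) : ℝ) +
        ((a * b + b * c + c * d - d * a : ℤ) : ℝ) * Real.sqrt 2 := by
  set s := Real.sqrt 2
  have hs : s ^ 2 = 2 := Real.sq_sqrt zero_le_two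
  have hx : (a : ℂ) + (b : ℂ) * ω8 + (c : ℂ) * ω8 ^ 2 + (d : ℂ) * ω8 ^ 3 =
      ((a + (b - d) * s / 2 : ℝ) : ℂ) + ((c + (b + d) * s / 2 : ℝ) : ℂ) * I := by
    rw [pow_succ ω8 2, ω8_sq, ω8_eq]
    push_cast
    linear_combination (d * s / 2 : ℂ) * I_sq
  rw [hx, normSq_add_mul_I]
  push_cast
  linear_combination ((b - d) ^ 2 / 4 + (b + d) ^ 2 / 4 : ℝ) * hs

theorem normSq_sqrt_two_pow (κ : ℕ) : normSq ((Real.sqrt 2 : ℂ) ^ κ) = 2 ^ κ := by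
  rw [map_pow, normSq_ofReal, Real.mul_self_sqrt zero_le_two]

theorem Int.eq_and_eq_of_add_mul_sqrt_two_eq {p q r s : ℤ}
    (h : (p : ℝ) + q * Real.sqrt 2 = r + s * Real.sqrt 2) : p = r ∧ q = s := by
  have two_ne_sq (n : ℤ) : (2 : ℤ) ≠ n * n := fun h ↦ Int.sq_ne_two_mod_four n (by rw [← h]; rfl)
  have := Zsqrtd.toReal_injective zero_le_two two_ne_sq (a₁ := ⟨p, q⟩) (a₂ := ⟨r, s⟩)
    (by simpa using h)
  simpa [Zsqrtd.ext_iff] using this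

theorem sum_sq_le_of_normSq_add_normSq_eq_one {u v : ℂ} (huv : normSq u + normSq v = 1)
    {a b c d : ℤ} {κ : ℕ}
    (hu : u = ((a : ℂ) + (b : ℂ) * ω8 + (c : ℂ) * ω8 ^ 2 + (d : ℂ) * ω8 ^ 3) /
      (Real.sqrt 2 : ℂ) ^ κ)
    (hv : InRingZW v) :
    a ^ 2 + b ^ 2 + c ^ 2 + d ^ 2 ≤ 2 ^ κ := by
  obtain ⟨a', b', c', d', l, rfl⟩ := hv
  rw [hu, normSq_div, normSq_div, normSq_int_add_ω8, normSq_int_add_ω8, normSq_sqrt_two_pow,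
    normSq_sqrt_two_pow] at huv
  have hcleared :
      ((2 ^ l * (a ^ 2 + b ^ 2 + c ^ 2 + d ^ 2) + 2 ^ κ * (a' ^ 2 + b' ^ 2 + c' ^ 2 + d' ^ 2) :
          ℤ) : ℝ) +
        ((2 ^ l * (a * b + b * c + c * d - d * a) + 2 ^ κ * (a' * b' + b' * c' + c' * d' - d' * a') :
          ℤ) : ℝ) * Real.sqrt 2 =
      ((2 ^ (κ + l) : ℤ) : ℝ) + ((0 : ℤ) : ℝ) * Real.sqrt 2 := by
    have h2κ : (2 : ℝ) ^ κ ≠ 0 := by positivity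
    have h2l : (2 : ℝ) ^ l ≠ 0 := by positivity
    field_simp at huv
    push_cast [pow_add] at huv ⊢
    linear_combination huv
  have hrat := (Int.eq_and_eq_of_add_mul_sqrt_two_eq hcleared).1
  have hpos : (0 : ℤ) < 2 ^ l := by positivity
  refine le_of_mul_le_mul_left (a := 2 ^ l) ?_ hpos
  have : (0 : ℤ) ≤ 2 ^ κ * (a' ^ 2 + b' ^ 2 + c' ^ 2 + d' ^ 2) := by positivity
  rw [pow_add] at hrat
  linarith

theorem Matrix.sum_normSq_apply_of_mem_unitaryGroup {n : Type*} [Fintype n] [DecidableEq n]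
    {U : Matrix n n ℂ} (hU : U ∈ unitaryGroup n ℂ) (i : n) :
    ∑ j, normSq (U i j) = 1 := by
  have h := congrFun (congrFun (mem_unitaryGroup_iff.mp hU) i) i
  simp only [mul_apply, star_apply, one_apply_eq, RCLike.star_def, mul_conj] at h
  exact_mod_cast h

/-- if u is an entry of a 2×2 unitary with all entries in ℤ[i,1/√2], written
u = (a+bω+cω²+dω³)/√2^⌈m/2⌉, then a² + b² + c² + d² ≤ 2^⌈m/2⌉. -/
theorem unitary_entry_bound (U : Matrix (Fin 2) (Fin 2) ℂ)
    (hU : U ∈ Matrix.unitaryGroup (Fin 2) ℂ)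
    (hring : ∀ i j : Fin 2, InRingZW (U i j))
    (i j : Fin 2) (a b c d : ℤ) (m : ℕ)
    (hu : U i j = ((a : ℂ) + (b : ℂ) * ω8 + (c : ℂ) * ω8 ^ 2 + (d : ℂ) * ω8 ^ 3) /
      (Real.sqrt 2 : ℂ) ^ ((m + 1) / 2)) :
    a ^ 2 + b ^ 2 + c ^ 2 + d ^ 2 ≤ 2 ^ ((m + 1) / 2) := by
  have hrow := sum_normSq_apply_of_mem_unitaryGroup hU i
  rw [Fin.sum_univ_two] at hrow
  fin_cases j
  · exact sum_sq_le_of_normSq_add_normSq_eq_one hrow hu (hring i 1)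
  · exact sum_sq_le_of_normSq_add_normSq_eq_one ((add_comm _ _).trans hrow) hu (hring i 0)
end
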